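/- In B_{m,n}(q,t), for all integers i, k with 1 ≤ i, i + 1 ≤ k ≤ min{m,n}, and such that the generator H_{-(i+1)} exists (i.e. i + 1 ≤ m − 1), one has e_i H_{-(i+1)} H_{-i} e_k = t · ((t − t⁻¹)/(q − q⁻¹))^{i−1} · H_{-(i+1)} e_k. -/

import Mathlib

open scoped Classical

noncomputable section

/-- The field `ℚ(q,t)` of rational functions in two indeterminates over `ℚ`. -/
abbrev KK : Type := FractionRing (MvPolynomial (Fin 2) ℚ)

/-- The indeterminate `q` viewed inside `ℚ(q,t)`. -/
def qv : KK := algebraMap (MvPolynomial (Fin 2) ℚ) KK (MvPolynomial.X 0)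

/-- The indeterminate `t` viewed inside `ℚ(q,t)`. -/
def tv : KK := algebraMap (MvPolynomial (Fin 2) ℚ) KK (MvPolynomial.X 1)

/-- The valid indices `i` for the generators `H i` of `B_{m,n}(q,t)`:
`1 ≤ i ≤ n - 1` or `1 ≤ -i ≤ m - 1`. -/
def validIdx (m n : ℕ) (i : ℤ) : Prop :=
  (1 ≤ i ∧ i ≤ (n : ℤ) - 1) ∨ (1 ≤ -i ∧ -i ≤ (m : ℤ) - 1)

/-- Generators of the quantized walled Brauer algebra `B_{m,n}(q,t)`. -/
inductive WBgen (m n : ℕ) : Type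
  | H (i : ℤ) (h : validIdx m n i) : WBgen m n
  | E : WBgen m n

/-- The generator `H i` in the free algebra. -/
def fH (m n : ℕ) (i : ℤ) (h : validIdx m n i) : FreeAlgebra KK (WBgen m n) :=
  FreeAlgebra.ι KK (WBgen.H i h)

/-- The generator `e` in the free algebra. -/
def fE (m n : ℕ) : FreeAlgebra KK (WBgen m n) := FreeAlgebra.ι KK WBgen.E

/-- The element `H i - (q - q⁻¹)`, which becomes the inverse of `H i` in the quotient. -/
def fHinv (m n : ℕ) (i : ℤ) (h : validIdx m n i) : FreeAlgebra KK (WBgen m n) :=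
  fH m n i h - algebraMap KK _ (qv - qv⁻¹)

/-- The defining relations of the quantized walled Brauer algebra `B_{m,n}(q,t)`. -/
inductive WBrel (m n : ℕ) :
    FreeAlgebra KK (WBgen m n) → FreeAlgebra KK (WBgen m n) → Prop
  | quad (i : ℤ) (h : validIdx m n i) :
      WBrel m n ((fH m n i h - algebraMap KK _ qv) * (fH m n i h + algebraMap KK _ qv⁻¹)) 0
  | comm (i : ℤ) (hi : validIdx m n i) (j : ℤ) (hj : validIdx m n j) (hij : 1 < |i - j|) :
      WBrel m n (fH m n i hi * fH m n j hj) (fH m n j hj * fH m n i hi)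
  | braid (i : ℤ) (hi : validIdx m n i) (hi1 : validIdx m n (i + 1)) :
      WBrel m n (fH m n i hi * fH m n (i + 1) hi1 * fH m n i hi)
        (fH m n (i + 1) hi1 * fH m n i hi * fH m n (i + 1) hi1)
  | commE (i : ℤ) (hi : validIdx m n i) (h2 : 2 ≤ |i|) :
      WBrel m n (fH m n i hi * fE m n) (fE m n * fH m n i hi)
  | eHe (i : ℤ) (hi : validIdx m n i) (h : i = 1 ∨ i = -1) :
      WBrel m n (fE m n * fH m n i hi * fE m n) (algebraMap KK _ tv * fE m n)
  | esq : WBrel m n (fE m n * fE m n)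
      (algebraMap KK _ ((tv - tv⁻¹) / (qv - qv⁻¹)) * fE m n)
  | rel7 (h1 : validIdx m n 1) (hm : validIdx m n (-1)) :
      WBrel m n (fE m n * fHinv m n (-1) hm * fH m n 1 h1 * fE m n * fH m n (-1) hm)
        (fE m n * fHinv m n (-1) hm * fH m n 1 h1 * fE m n * fH m n 1 h1)
  | rel8 (h1 : validIdx m n 1) (hm : validIdx m n (-1)) :
      WBrel m n (fH m n (-1) hm * fE m n * fHinv m n (-1) hm * fH m n 1 h1 * fE m n)
        (fH m n 1 h1 * fE m n * fHinv m n (-1) hm * fH m n 1 h1 * fE m n)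

/-- The quantized walled Brauer algebra `B_{m,n}(q,t)`. -/
abbrev WB (m n : ℕ) : Type := RingQuot (WBrel m n)

/-- The generator `H i` of `B_{m,n}(q,t)`. -/
def HB (m n : ℕ) (i : ℤ) (h : validIdx m n i) : WB m n :=
  RingQuot.mkAlgHom KK (WBrel m n) (fH m n i h)

/-- The generator `e` of `B_{m,n}(q,t)`. -/
def EB (m n : ℕ) : WB m n := RingQuot.mkAlgHom KK (WBrel m n) (fE m n)

/-- The inverse `H i⁻¹ = H i - (q - q⁻¹)` of the generator `H i`. -/
def HBinv (m n : ℕ) (i : ℤ) (h : validIdx m n i) : WB m n :=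
  HB m n i h - algebraMap KK _ (qv - qv⁻¹)

/-- Total version of `H i` (equal to `H i` for valid `i`, junk value `1` otherwise). -/
def Htil (m n : ℕ) (i : ℤ) : WB m n :=
  if h : validIdx m n i then HB m n i h else 1

/-- Total version of `H i⁻¹` (equal to `H i⁻¹` for valid `i`, junk value `1` otherwise). -/
def Htilinv (m n : ℕ) (i : ℤ) : WB m n :=
  if h : validIdx m n i then HBinv m n i h else 1

/-- The elements `e_k`:  `e_0 = 1`, `e_1 = e`, and
`e_{k+1} = e ⬝ H_{-1}⁻¹ H_{-2}⁻¹ ⋯ H_{-k}⁻¹ ⬝ H_1 H_2 ⋯ H_k ⬝ e_k`. -/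
def ek (m n : ℕ) : ℕ → WB m n
  | 0 => 1
  | k + 1 =>
      EB m n *
        (((List.range k).map (fun j => Htilinv m n (-((j + 1 : ℕ) : ℤ)))).prod) *
        (((List.range k).map (fun j => Htil m n ((j + 1 : ℕ) : ℤ))).prod) *
        ek m n k

/-!
Commuting `H_{-(i+1)}` past `e_i` reduces the claim to `e_i H_{-i} e_k = t δ^{i-1} e_k`, where
`δ = (t - t⁻¹)/(q - q⁻¹)`. This follows from `e_j e_k = δ^j e_k` for `j ≤ k ≤ min m n` and
`e · H_{-1}⁻¹ ⋯ H_{-j}⁻¹ · H_{-(j+1)} · H_1 ⋯ H_j · e_k = t e_k` for `j + 2 ≤ k ≤ min m n`.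
Both are proved by induction, unfolding
`e_k = e · H_{-1}⁻¹ ⋯ H_{-(k-1)}⁻¹ · H_1 ⋯ H_{k-1} · e_{k-1}`: the braid relations let the
shorter words pass through the longer ones with every index lowered by one, and relation (7)
absorbs the `H_{-1}⁻¹ H_1` that this leaves next to `e H_{-1}⁻¹ H_1 e`.
-/

theorem SemiconjBy.list_prod_map_range' {M : Type*} [Monoid M] {c : M} {f : ℕ → M} {s k : ℕ}
    (h : ∀ l, s ≤ l → l < s + k → SemiconjBy c (f l) (f (l + 1))) :
    SemiconjBy c ((List.range' s k).map f).prod ((List.range' (s + 1) k).map f).prod := by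
  induction k generalizing s with
  | zero => exact SemiconjBy.one_right c
  | succ k ih =>
    simp only [List.range'_succ, List.map_cons, List.prod_cons]
    exact (h s le_rfl (by omega)).mul_right (ih fun l hl hlk => h l (by omega) (by omega))

theorem semiconjBy_inv_mul_inv_of_braid {G : Type*} [Group G] {x y : G}
    (h : y * x * y = x * y * x) : SemiconjBy (x⁻¹ * y⁻¹) x y := by
  have := congrArg (fun z => x⁻¹ * y⁻¹ * z * x⁻¹ * y⁻¹) h
  simp only [mul_assoc, inv_mul_cancel_left, mul_inv_cancel, mul_one] at this
  simp only [SemiconjBy, mul_assoc]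
  exact this.symm

theorem mul_sub_algebraMap_eq_one {F A : Type*} [Field F] [Ring A] [Algebra F A] {q : F}
    (hq : q ≠ 0) {H : A} (h : (H - algebraMap F A q) * (H + algebraMap F A q⁻¹) = 0) :
    H * (H - algebraMap F A (q - q⁻¹)) = 1 := by
  simp only [Algebra.algebraMap_eq_smul_one] at h ⊢
  have expand : (H - q • 1) * (H + q⁻¹ • (1 : A)) = H * (H - (q - q⁻¹) • 1) - (q * q⁻¹) • 1 := by
    simp only [mul_sub, sub_mul, mul_add, smul_mul_assoc, mul_smul_comm, mul_one, one_mul]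
    rw [smul_sub, smul_smul, sub_smul, mul_comm q⁻¹ q]
    abel
  rwa [expand, mul_inv_cancel₀ hq, one_smul, sub_eq_zero] at h

theorem sub_algebraMap_mul_eq_one {F A : Type*} [Field F] [Ring A] [Algebra F A] {q : F}
    (hq : q ≠ 0) {H : A} (h : (H - algebraMap F A q) * (H + algebraMap F A q⁻¹) = 0) :
    (H - algebraMap F A (q - q⁻¹)) * H = 1 := by
  rw [← ((Commute.refl H).sub_right (Algebra.commute_algebraMap_right _ H)).eq]
  exact mul_sub_algebraMap_eq_one hq h

lemma qv_ne_zero : qv ≠ 0 :=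
  (IsFractionRing.injective (MvPolynomial (Fin 2) ℚ) KK).ne_iff' (map_zero _) |>.mpr
    (MvPolynomial.X_ne_zero _)

namespace WB

variable {m n : ℕ}

local notation "δ" => (tv - tv⁻¹) / (qv - qv⁻¹)

lemma mkAlgHom_fH (i : ℤ) (h : validIdx m n i) :
    RingQuot.mkAlgHom KK (WBrel m n) (fH m n i h) = HB m n i h := rfl

lemma mkAlgHom_fE : RingQuot.mkAlgHom KK (WBrel m n) (fE m n) = EB m n := rfl

lemma mkAlgHom_fHinv (i : ℤ) (h : validIdx m n i) :
    RingQuot.mkAlgHom KK (WBrel m n) (fHinv m n i h) = HBinv m n i h := by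
  rw [fHinv, map_sub, AlgHom.commutes, mkAlgHom_fH, HBinv]

lemma HB_quadratic (i : ℤ) (h : validIdx m n i) :
    (HB m n i h - algebraMap KK (WB m n) qv) * (HB m n i h + algebraMap KK (WB m n) qv⁻¹) = 0 := by
  simpa only [map_mul, map_sub, map_add, map_zero, AlgHom.commutes, mkAlgHom_fH]
    using RingQuot.mkAlgHom_rel KK (WBrel.quad i h)

lemma Htil_mul_Htilinv (i : ℤ) : Htil m n i * Htilinv m n i = 1 := by
  unfold Htil Htilinv
  split_ifs with h
  · exact mul_sub_algebraMap_eq_one (A := WB m n) qv_ne_zero (HB_quadratic i h)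
  · exact mul_one 1

lemma Htilinv_mul_Htil (i : ℤ) : Htilinv m n i * Htil m n i = 1 := by
  unfold Htil Htilinv
  split_ifs with h
  · exact sub_algebraMap_mul_eq_one (A := WB m n) qv_ne_zero (HB_quadratic i h)
  · exact mul_one 1

def Hunit (m n : ℕ) (i : ℤ) : (WB m n)ˣ :=
  ⟨Htil m n i, Htilinv m n i, Htil_mul_Htilinv i, Htilinv_mul_Htil i⟩

lemma commute_Htil_Htil {a b : ℤ} (h : a + 2 ≤ b ∨ b + 2 ≤ a) :
    Commute (Htil m n a) (Htil m n b) := by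
  unfold Htil
  split_ifs with ha hb
  · show _ * _ = _ * _
    simpa only [map_mul, mkAlgHom_fH]
      using RingQuot.mkAlgHom_rel KK (WBrel.comm a ha b hb (by rw [lt_abs]; omega))
  all_goals simp

lemma commute_EB_Htil {a : ℤ} (h : a ≤ -2 ∨ 2 ≤ a) : Commute (EB m n) (Htil m n a) := by
  unfold Htil
  split_ifs with ha
  · show _ * _ = _ * _
    simpa only [map_mul, mkAlgHom_fH, mkAlgHom_fE]
      using (RingQuot.mkAlgHom_rel KK (WBrel.commE a ha (by rw [le_abs]; omega))).symm
  · exact Commute.one_right _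

lemma EB_mul_EB : EB m n * EB m n = algebraMap KK (WB m n) δ * EB m n := by
  simpa only [map_mul, AlgHom.commutes, mkAlgHom_fE]
    using RingQuot.mkAlgHom_rel KK (WBrel.esq (m := m) (n := n))

lemma EB_mul_Htil_mul_EB (h : validIdx m n (-1)) :
    EB m n * Htil m n (-1) * EB m n = algebraMap KK (WB m n) tv * EB m n := by
  rw [Htil, dif_pos h]
  simpa only [map_mul, AlgHom.commutes, mkAlgHom_fH, mkAlgHom_fE]
    using RingQuot.mkAlgHom_rel KK (WBrel.eHe (-1) h (.inr rfl))

lemma Htil_braid {i : ℤ} (hi : validIdx m n i) (hi1 : validIdx m n (i + 1)) :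
    Htil m n i * Htil m n (i + 1) * Htil m n i
      = Htil m n (i + 1) * Htil m n i * Htil m n (i + 1) := by
  rw [Htil, dif_pos hi, Htil, dif_pos hi1]
  simpa only [map_mul, mkAlgHom_fH] using RingQuot.mkAlgHom_rel KK (WBrel.braid i hi hi1)

/-- Relation (7) says that `u := e H₋₁⁻¹ H₁ e` satisfies `u H₋₁ = u H₁`, hence `u H₋₁⁻¹ H₁ = u`. -/
lemma EB_Htilinv_Htil_EB_mul_Htilinv_mul_Htil (h1 : validIdx m n 1) (hm1 : validIdx m n (-1)) :
    EB m n * Htilinv m n (-1) * Htil m n 1 * EB m n * (Htilinv m n (-1) * Htil m n 1)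
      = EB m n * Htilinv m n (-1) * Htil m n 1 * EB m n := by
  set u := EB m n * Htilinv m n (-1) * Htil m n 1 * EB m n
  have rel7 : u * HB m n (-1) hm1 = u * HB m n 1 h1 := by
    simpa only [u, map_mul, mkAlgHom_fH, mkAlgHom_fE, mkAlgHom_fHinv, Htil, Htilinv, dif_pos h1,
      dif_pos hm1] using RingQuot.mkAlgHom_rel KK (WBrel.rel7 h1 hm1 (m := m) (n := n))
  have : u * Htilinv m n (-1) = u * Htilinv m n 1 := by
    set c := algebraMap KK (WB m n) (qv - qv⁻¹)
    rw [Htilinv, dif_pos hm1, Htilinv, dif_pos h1]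
    calc u * (HB m n (-1) hm1 - c) = u * HB m n (-1) hm1 - u * c := mul_sub u _ c
      _ = u * HB m n 1 h1 - u * c := by rw [rel7]
      _ = u * (HB m n 1 h1 - c) := (mul_sub u _ c).symm
  rw [← mul_assoc, this, mul_assoc, Htilinv_mul_Htil, mul_one]

def negInvProd (m n s k : ℕ) : WB m n :=
  ((List.range' s k).map fun j : ℕ => Htilinv m n (-(j : ℤ))).prod

def posProd (m n s k : ℕ) : WB m n :=
  ((List.range' s k).map fun j : ℕ => Htil m n j).prod

lemma ek_succ (k : ℕ) :
    ek m n (k + 1) = EB m n * negInvProd m n 1 k * posProd m n 1 k * ek m n k := by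
  simp only [ek, negInvProd, posProd, List.range'_eq_map_range, List.map_map]
  congr 4 <;> ext j <;> simp [add_comm]

lemma negInvProd_zero (s : ℕ) : negInvProd m n s 0 = 1 := rfl

lemma posProd_zero (s : ℕ) : posProd m n s 0 = 1 := rfl

lemma negInvProd_add (s k l : ℕ) :
    negInvProd m n s (k + l) = negInvProd m n s k * negInvProd m n (s + k) l := by
  rw [negInvProd, ← List.range'_append_1, List.map_append, List.prod_append]; rfl

lemma posProd_add (s k l : ℕ) :
    posProd m n s (k + l) = posProd m n s k * posProd m n (s + k) l := by
  rw [posProd, ← List.range'_append_1, List.map_append, List.prod_append]; rfl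

lemma negInvProd_succ (s k : ℕ) :
    negInvProd m n s (k + 1) = Htilinv m n (-(s : ℤ)) * negInvProd m n (s + 1) k := by
  simp [negInvProd, List.range'_succ]

lemma posProd_succ (s k : ℕ) :
    posProd m n s (k + 1) = Htil m n s * posProd m n (s + 1) k := by
  simp [posProd, List.range'_succ]

lemma commute_negInvProd_right {x : WB m n} {s k : ℕ}
    (h : ∀ j : ℕ, s ≤ j → j < s + k → Commute x (Htil m n (-(j : ℤ)))) :
    Commute x (negInvProd m n s k) := by
  refine Commute.list_prod_right _ _ fun y hy => ?_
  obtain ⟨j, hj, rfl⟩ := List.mem_map.mp hy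
  rw [List.mem_range'_1] at hj
  exact (h j hj.1 hj.2).units_inv_right (u := Hunit m n _)

lemma commute_posProd_right {x : WB m n} {s k : ℕ}
    (h : ∀ j : ℕ, s ≤ j → j < s + k → Commute x (Htil m n j)) :
    Commute x (posProd m n s k) := by
  refine Commute.list_prod_right _ _ fun y hy => ?_
  obtain ⟨j, hj, rfl⟩ := List.mem_map.mp hy
  rw [List.mem_range'_1] at hj
  exact h j hj.1 hj.2

lemma commute_EB_negInvProd {s : ℕ} (hs : 2 ≤ s) (k : ℕ) :
    Commute (EB m n) (negInvProd m n s k) :=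
  commute_negInvProd_right fun _ _ _ => commute_EB_Htil (by omega)

lemma commute_EB_posProd {s : ℕ} (hs : 2 ≤ s) (k : ℕ) :
    Commute (EB m n) (posProd m n s k) :=
  commute_posProd_right fun _ _ _ => commute_EB_Htil (by omega)

lemma commute_negInvProd_posProd {s s' : ℕ} (hs : 1 ≤ s) (hs' : 1 ≤ s') (k k' : ℕ) :
    Commute (negInvProd m n s k) (posProd m n s' k') :=
  commute_posProd_right fun _ _ _ =>
    (commute_negInvProd_right fun _ _ _ => commute_Htil_Htil (by omega)).symm

lemma semiconjBy_negInvProd_Htil {s K : ℕ} (hs : 1 ≤ s) (hsK : s + 1 ≤ K) (hKm : K + 1 ≤ m) :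
    SemiconjBy (negInvProd m n 1 K) (Htil m n (-(s : ℤ))) (Htil m n (-((s + 1 : ℕ) : ℤ))) := by
  obtain ⟨p, rfl⟩ : ∃ p, s = p + 1 := ⟨s - 1, by omega⟩
  obtain ⟨r, rfl⟩ : ∃ r, K = p + 2 + r := ⟨K - p - 2, by omega⟩
  have braid : Hunit m n (-((p + 2 : ℕ) : ℤ)) * Hunit m n (-((p + 1 : ℕ) : ℤ)) *
      Hunit m n (-((p + 2 : ℕ) : ℤ)) = Hunit m n (-((p + 1 : ℕ) : ℤ)) *
      Hunit m n (-((p + 2 : ℕ) : ℤ)) * Hunit m n (-((p + 1 : ℕ) : ℤ)) := by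
    have := Htil_braid (m := m) (n := n) (i := -((p + 2 : ℕ) : ℤ))
      (Or.inr ⟨by omega, by omega⟩) (Or.inr ⟨by omega, by omega⟩)
    rw [show -((p + 2 : ℕ) : ℤ) + 1 = -((p + 1 : ℕ) : ℤ) by omega] at this
    exact Units.ext this
  have middle : negInvProd m n (1 + p) 2 = Htilinv m n (-((p + 1 : ℕ) : ℤ)) *
      Htilinv m n (-((p + 2 : ℕ) : ℤ)) := by
    simp [negInvProd, List.range'_succ, add_comm 1 p, add_assoc]
  rw [negInvProd_add, negInvProd_add, middle]
  refine .mul_left (y := Htil m n (-((p + 1 : ℕ) : ℤ)))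
    (.mul_left (y := Htil m n (-((p + 2 : ℕ) : ℤ))) ?_ ?_) ?_
  · refine (commute_negInvProd_right fun _ _ _ => ?_).symm
    exact commute_Htil_Htil (by omega)
  · exact (semiconjBy_inv_mul_inv_of_braid braid).units_val
  · refine (commute_negInvProd_right fun _ _ _ => ?_).symm
    exact commute_Htil_Htil (by omega)

lemma semiconjBy_posProd_Htil {s K : ℕ} (hs : 1 ≤ s) (hsK : s + 1 ≤ K) (hKn : K + 1 ≤ n) :
    SemiconjBy (posProd m n 1 K) (Htil m n s) (Htil m n (s + 1 : ℕ)) := by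
  obtain ⟨p, rfl⟩ : ∃ p, s = p + 1 := ⟨s - 1, by omega⟩
  obtain ⟨r, rfl⟩ : ∃ r, K = p + 2 + r := ⟨K - p - 2, by omega⟩
  have middle : posProd m n (1 + p) 2 = Htil m n (p + 1 : ℕ) * Htil m n (p + 2 : ℕ) := by
    simp [posProd, List.range'_succ, add_comm 1 p, add_assoc]
  rw [posProd_add, posProd_add, middle]
  refine .mul_left (y := Htil m n (p + 1 : ℕ)) (.mul_left (y := Htil m n (p + 2 : ℕ)) ?_ ?_) ?_
  · refine (commute_posProd_right fun _ _ _ => ?_).symm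
    exact commute_Htil_Htil (by omega)
  · have := Htil_braid (m := m) (n := n) (i := (p + 1 : ℕ))
      (Or.inl ⟨by omega, by omega⟩) (Or.inl ⟨by omega, by omega⟩)
    simpa only [SemiconjBy, mul_assoc, Nat.cast_add, Nat.cast_one, Nat.cast_ofNat, add_assoc,
      one_add_one_eq_two] using this
  · refine (commute_posProd_right fun _ _ _ => ?_).symm
    exact commute_Htil_Htil (by omega)

lemma semiconjBy_negInvProd {j K : ℕ} (hjK : j < K) (hKm : K + 1 ≤ m) :
    SemiconjBy (negInvProd m n 1 K) (negInvProd m n 1 j) (negInvProd m n 2 j) :=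
  SemiconjBy.list_prod_map_range' fun _ hl hlj =>
    (semiconjBy_negInvProd_Htil hl (by omega) hKm).units_inv_right
      (x := Hunit m n _) (y := Hunit m n _)

lemma semiconjBy_posProd {j K : ℕ} (hjK : j < K) (hKn : K + 1 ≤ n) :
    SemiconjBy (posProd m n 1 K) (posProd m n 1 j) (posProd m n 2 j) :=
  SemiconjBy.list_prod_map_range' fun _ hl hlj => semiconjBy_posProd_Htil hl (by omega) hKn

lemma commute_Htil_ek {a : ℤ} {l : ℕ} (h : a + l + 1 ≤ 0) : Commute (Htil m n a) (ek m n l) := by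
  induction l with
  | zero => exact Commute.one_right _
  | succ l ih =>
    rw [ek_succ]
    refine (((commute_EB_Htil (by omega)).symm.mul_right ?_).mul_right ?_).mul_right (ih (by omega))
    · exact commute_negInvProd_right fun _ _ _ => commute_Htil_Htil (by omega)
    · exact commute_posProd_right fun _ _ _ => commute_Htil_Htil (by omega)

lemma EB_mul_mul_ek_succ {X : WB m n} {c : KK}
    (h : EB m n * X * EB m n = algebraMap KK (WB m n) c * EB m n) (K : ℕ) :
    EB m n * X * ek m n (K + 1) = algebraMap KK (WB m n) c * ek m n (K + 1) := by
  simp only [ek_succ K, ← mul_assoc, h]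

lemma negInvProd_mul_mul_posProd_succ {X : WB m n} (hX : Commute X (Htil m n 1)) (j : ℕ) :
    negInvProd m n 1 (j + 1) * X * posProd m n 1 (j + 1)
      = Htilinv m n (-1) * Htil m n 1 * (negInvProd m n 2 j * X * posProd m n 2 j) := by
  have hA : Commute (negInvProd m n 2 j) (Htil m n 1) :=
    (commute_negInvProd_right fun _ _ _ => commute_Htil_Htil (by omega)).symm
  simp only [negInvProd_succ, posProd_succ, mul_assoc, Nat.cast_one, Nat.reduceAdd]
  rw [hX.left_comm, hA.left_comm]

lemma negInvProd_mul_posProd_succ (K : ℕ) :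
    negInvProd m n 1 (K + 1) * posProd m n 1 (K + 1)
      = Htilinv m n (-1) * Htil m n 1 * (negInvProd m n 2 K * posProd m n 2 K) := by
  simpa only [mul_one] using negInvProd_mul_mul_posProd_succ (Commute.one_left (Htil m n 1)) K

lemma EB_negInvProd_mul_posProd_ek_succ_succ {Y Y' : WB m n} {c : KK} {j K : ℕ}
    (hYh : Commute Y (Htil m n 1)) (hYe : Commute (EB m n) Y)
    (hYY' : SemiconjBy (negInvProd m n 1 (K + 1)) Y' Y)
    (hY'B : Commute Y' (posProd m n 1 (K + 1))) (hjK : j ≤ K) (hK : K + 2 ≤ min m n)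
    (ih : EB m n * negInvProd m n 1 j * Y' * posProd m n 1 j * ek m n (K + 1)
      = algebraMap KK (WB m n) c * ek m n (K + 1)) :
    EB m n * negInvProd m n 1 (j + 1) * Y * posProd m n 1 (j + 1) * ek m n (K + 2)
      = algebraMap KK (WB m n) c * ek m n (K + 2) := by
  have hm : K + 2 ≤ m := hK.trans (min_le_left m n)
  have hn : K + 2 ≤ n := hK.trans (min_le_right m n)
  have shift : SemiconjBy (negInvProd m n 1 (K + 1) * posProd m n 1 (K + 1))
      (negInvProd m n 1 j * Y' * posProd m n 1 j) (negInvProd m n 2 j * Y * posProd m n 2 j) := by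
    refine .mul_right (.mul_right ?_ ?_) ?_
    · exact .mul_left (semiconjBy_negInvProd (by omega) (by omega))
        (commute_negInvProd_posProd le_rfl le_rfl _ _).symm
    · exact .mul_left hYY' hY'B.symm
    · exact .mul_left (commute_negInvProd_posProd le_rfl one_le_two _ _)
        (semiconjBy_posProd (by omega) (by omega))
  have hWe : Commute (EB m n) (negInvProd m n 2 j * Y * posProd m n 2 j) :=
    ((commute_EB_negInvProd le_rfl j).mul_right hYe).mul_right (commute_EB_posProd le_rfl j)
  have hQe : Commute (EB m n) (negInvProd m n 2 K * posProd m n 2 K) :=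
    (commute_EB_negInvProd le_rfl K).mul_right (commute_EB_posProd le_rfl K)
  have absorb := EB_Htilinv_Htil_EB_mul_Htilinv_mul_Htil (m := m) (n := n)
    (Or.inl ⟨le_rfl, by omega⟩) (Or.inr ⟨le_rfl, by omega⟩)
  have ih' : EB m n * (negInvProd m n 1 j * Y' * posProd m n 1 j) * ek m n (K + 1)
      = algebraMap KK (WB m n) c * ek m n (K + 1) := by simpa only [mul_assoc] using ih
  calc EB m n * negInvProd m n 1 (j + 1) * Y * posProd m n 1 (j + 1) * ek m n (K + 2)
      = EB m n * (negInvProd m n 1 (j + 1) * Y * posProd m n 1 (j + 1)) *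
          (EB m n * negInvProd m n 1 (K + 1) * posProd m n 1 (K + 1) * ek m n (K + 1)) := by
        rw [ek_succ (K + 1)]; simp only [mul_assoc]
    _ = EB m n * Htilinv m n (-1) * Htil m n 1 * (negInvProd m n 2 j * Y * posProd m n 2 j *
          EB m n * (negInvProd m n 1 (K + 1) * posProd m n 1 (K + 1))) * ek m n (K + 1) := by
        rw [negInvProd_mul_mul_posProd_succ hYh]; simp only [mul_assoc]
    _ = EB m n * Htilinv m n (-1) * Htil m n 1 * (EB m n *
          (negInvProd m n 1 (K + 1) * posProd m n 1 (K + 1) *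
            (negInvProd m n 1 j * Y' * posProd m n 1 j))) * ek m n (K + 1) := by
        rw [← hWe.eq, mul_assoc (EB m n) (negInvProd m n 2 j * Y * posProd m n 2 j), ← shift.eq]
    _ = EB m n * Htilinv m n (-1) * Htil m n 1 * EB m n * (Htilinv m n (-1) * Htil m n 1) *
          (negInvProd m n 2 K * posProd m n 2 K) *
          (negInvProd m n 1 j * Y' * posProd m n 1 j * ek m n (K + 1)) := by
        rw [negInvProd_mul_posProd_succ]; simp only [mul_assoc]
    _ = EB m n * Htilinv m n (-1) * Htil m n 1 * (negInvProd m n 2 K * posProd m n 2 K) *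
          (EB m n * (negInvProd m n 1 j * Y' * posProd m n 1 j) * ek m n (K + 1)) := by
        rw [absorb, mul_assoc (EB m n * _ * _) (EB m n), hQe.eq]; simp only [mul_assoc]
    _ = algebraMap KK (WB m n) c * ek m n (K + 2) := by
        rw [ih', Algebra.left_comm, ek_succ (K + 1), mul_assoc (EB m n) (negInvProd m n 1 (K + 1)),
          negInvProd_mul_posProd_succ]
        simp only [mul_assoc]

lemma EB_negInvProd_posProd_ek {j K : ℕ} (hjK : j ≤ K) (hK : K + 1 ≤ min m n) :
    EB m n * negInvProd m n 1 j * posProd m n 1 j * ek m n (K + 1)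
      = algebraMap KK (WB m n) δ * ek m n (K + 1) := by
  induction j generalizing K with
  | zero =>
    simpa only [negInvProd_zero, posProd_zero, mul_one]
      using EB_mul_mul_ek_succ (X := 1) (by rw [mul_one, EB_mul_EB]) K
  | succ j ih =>
    obtain ⟨K, rfl⟩ : ∃ K', K = K' + 1 := ⟨K - 1, by omega⟩
    simpa only [mul_one] using EB_negInvProd_mul_posProd_ek_succ_succ (Commute.one_left _)
      (Commute.one_right _) (SemiconjBy.one_right _) (Commute.one_left _) (by omega) hK
      (by simpa only [mul_one] using ih (K := K) (by omega) (by omega))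

lemma EB_negInvProd_Htil_posProd_ek {i K : ℕ} (hiK : i + 1 ≤ K) (hK : K + 1 ≤ min m n) :
    EB m n * negInvProd m n 1 i * Htil m n (-((i + 1 : ℕ) : ℤ)) * posProd m n 1 i * ek m n (K + 1)
      = algebraMap KK (WB m n) tv * ek m n (K + 1) := by
  have hm : K + 1 ≤ m := hK.trans (min_le_left m n)
  induction i generalizing K with
  | zero =>
    simpa only [negInvProd_zero, posProd_zero, mul_one, zero_add, Nat.cast_one]
      using EB_mul_mul_ek_succ (EB_mul_Htil_mul_EB (Or.inr ⟨le_rfl, by omega⟩)) K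
  | succ i ih =>
    obtain ⟨K, rfl⟩ : ∃ K', K = K' + 1 := ⟨K - 1, by omega⟩
    refine EB_negInvProd_mul_posProd_ek_succ_succ (commute_Htil_Htil (by omega))
      (commute_EB_Htil (by omega)) (semiconjBy_negInvProd_Htil (by omega) (by omega) hm)
      (commute_posProd_right fun _ _ _ => commute_Htil_Htil (by omega)) (by omega) hK
      (ih (by omega) (by omega) (by omega))

lemma ek_mul_ek {j k : ℕ} (hjk : j ≤ k) (hk : k ≤ min m n) :
    ek m n j * ek m n k = algebraMap KK (WB m n) (δ ^ j) * ek m n k := by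
  induction j with
  | zero => rw [pow_zero, map_one]; rfl
  | succ j ih =>
    obtain ⟨K, rfl⟩ : ∃ K, k = K + 1 := ⟨k - 1, by omega⟩
    rw [ek_succ j, mul_assoc _ (ek m n j), ih (by omega), Algebra.left_comm,
      EB_negInvProd_posProd_ek (by omega) hk, ← mul_assoc, ← map_mul, pow_succ]

lemma ek_succ_mul_Htil_mul_ek {i K : ℕ} (hiK : i + 1 ≤ K) (hK : K + 1 ≤ min m n) :
    ek m n (i + 1) * Htil m n (-((i + 1 : ℕ) : ℤ)) * ek m n (K + 1)
      = algebraMap KK (WB m n) (tv * δ ^ i) * ek m n (K + 1) := by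
  have hB : Commute (Htil m n (-((i + 1 : ℕ) : ℤ))) (posProd m n 1 i) :=
    commute_posProd_right fun _ _ _ => commute_Htil_Htil (by omega)
  calc ek m n (i + 1) * Htil m n (-((i + 1 : ℕ) : ℤ)) * ek m n (K + 1)
      = EB m n * negInvProd m n 1 i * posProd m n 1 i * Htil m n (-((i + 1 : ℕ) : ℤ)) *
          (ek m n i * ek m n (K + 1)) := by
        rw [ek_succ, mul_assoc _ (ek m n i), ← (commute_Htil_ek (by omega)).eq]
        simp only [mul_assoc]
    _ = algebraMap KK (WB m n) (δ ^ i) * (EB m n * negInvProd m n 1 i *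
          Htil m n (-((i + 1 : ℕ) : ℤ)) * posProd m n 1 i * ek m n (K + 1)) := by
        rw [ek_mul_ek (by omega) hK, Algebra.left_comm, mul_assoc _ (posProd m n 1 i), ← hB.eq]
        simp only [mul_assoc]
    _ = algebraMap KK (WB m n) (tv * δ ^ i) * ek m n (K + 1) := by
        rw [EB_negInvProd_Htil_posProd_ek hiK hK, ← mul_assoc, ← map_mul, mul_comm (δ ^ i)]

end WB

theorem ei_HH_ek_general (m n : ℕ) (i k : ℕ)
    (hi : 1 ≤ i) (hik : i + 1 ≤ k) (hk : k ≤ min m n) :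
    ek m n i * Htil m n (-((i : ℤ) + 1)) * Htil m n (-(i : ℤ)) * ek m n k =
      algebraMap KK (WB m n) (tv * ((tv - tv⁻¹) / (qv - qv⁻¹)) ^ (i - 1)) *
        (Htil m n (-((i : ℤ) + 1)) * ek m n k) := by
  obtain ⟨i, rfl⟩ : ∃ i', i = i' + 1 := ⟨i - 1, by omega⟩
  obtain ⟨K, rfl⟩ : ∃ K, k = K + 1 := ⟨k - 1, by omega⟩
  have hcomm : Commute (Htil m n (-(((i + 1 : ℕ) : ℤ) + 1))) (ek m n (i + 1)) :=
    WB.commute_Htil_ek (by omega)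
  rw [← hcomm.eq, mul_assoc _ (ek m n (i + 1)), mul_assoc,
    WB.ek_succ_mul_Htil_mul_ek (by omega) hk, Nat.add_sub_cancel, Algebra.left_comm]

/-- For `1 ≤ i`, `i + 1 ≤ k ≤ min{m,n}` and `i + 1 ≤ m - 1`, one has
`e_i H_{-(i+1)} H_{-i} e_k = t ((t - t⁻¹)/(q - q⁻¹))^{i-1} H_{-(i+1)} e_k`. -/
theorem ei_HH_ek (m n : ℕ) (hm : 1 ≤ m) (hn : 1 ≤ n) (i k : ℕ)
    (hi : 1 ≤ i) (hik : i + 1 ≤ k) (hk : k ≤ min m n)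
    (him : (i : ℤ) + 1 ≤ (m : ℤ) - 1) :
    ek m n i * Htil m n (-((i : ℤ) + 1)) * Htil m n (-(i : ℤ)) * ek m n k =
      algebraMap KK (WB m n) (tv * ((tv - tv⁻¹) / (qv - qv⁻¹)) ^ (i - 1)) *
        (Htil m n (-((i : ℤ) + 1)) * ek m n k) :=
  ei_HH_ek_general m n i k hi hik hk

end
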